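/- There exist constants C > 0 and δ > 0 such that for all ε with 0 ≤ ε < δ, |Ω(ε) − 1 − (3/8)ε²| ≤ C·ε⁴; that is, Ω(ε) = 1 + (3/8)ε² + O(ε⁴) as ε → 0. -/
import Mathlib

open Real Set

/-- The modulus κ(ε) = ε/√(2(1+ε²)). -/
noncomputable def kappaMod (ε : ℝ) : ℝ := ε / Real.sqrt (2 * (1 + ε ^ 2))

/-- The complete elliptic integral of the first kind
K(κ) = ∫₀^{π/2} dθ/√(1 - κ² sin²θ). -/
noncomputable def ellipticK (κ : ℝ) : ℝ :=
  ∫ θ in (0:ℝ)..(π / 2), 1 / Real.sqrt (1 - κ ^ 2 * Real.sin θ ^ 2)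

/-- The frequency Ω(ε) = (π/2)·√(1+ε²)/K(κ(ε)) of the single-mode solution. -/
noncomputable def freqOmega (ε : ℝ) : ℝ :=
  (π / 2) * Real.sqrt (1 + ε ^ 2) / ellipticK (kappaMod ε)

lemma inv_sqrt_lb {x : ℝ} (h0 : 0 ≤ x) (h1 : x ≤ 1/2) :
    1 + x/2 ≤ 1 / Real.sqrt (1 - x) := by
  have hx : (0:ℝ) < 1 - x := by linarith
  have hs : 0 < Real.sqrt (1 - x) := Real.sqrt_pos.2 hx
  have hs2 : Real.sqrt (1-x) ^ 2 = 1 - x := Real.sq_sqrt hx.le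
  rw [le_div_iff₀ hs]
  nlinarith [sq_nonneg ((1 + x/2) * Real.sqrt (1-x) - 1), hs.le, sq_nonneg x,
    mul_nonneg (mul_nonneg (by linarith : (0:ℝ) ≤ 1 + x/2) hs.le) h0]

lemma inv_sqrt_ub {x : ℝ} (h0 : 0 ≤ x) (h1 : x ≤ 1/2) :
    1 / Real.sqrt (1 - x) ≤ 1 + x/2 + x^2 := by
  have hx : (0:ℝ) < 1 - x := by linarith
  have hs : 0 < Real.sqrt (1 - x) := Real.sqrt_pos.2 hx
  have hs2 : Real.sqrt (1-x) ^ 2 = 1 - x := Real.sq_sqrt hx.le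
  rw [div_le_iff₀ hs]
  have ht : 0 ≤ (1 + x/2 + x^2) * Real.sqrt (1-x) := by positivity
  have key : 1 ≤ ((1 + x/2 + x^2) * Real.sqrt (1-x))^2 := by
    have : ((1 + x/2 + x^2) * Real.sqrt (1-x))^2 = (1 + x/2 + x^2)^2 * (1-x) := by
      rw [mul_pow, hs2]
    rw [this]; nlinarith [sq_nonneg x, sq_nonneg (x^2)]
  nlinarith [key, ht]

lemma ellipticK_lb {κ : ℝ} (hk : κ^2 ≤ 1/2) :
    (π/2) * (1 + κ^2/4) ≤ ellipticK κ := by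
  have hsin : ∀ θ : ℝ, 0 ≤ κ^2 * Real.sin θ^2 ∧ κ^2 * Real.sin θ^2 ≤ 1/2 := by
    intro θ
    constructor
    · positivity
    · have h1 : Real.sin θ ^ 2 ≤ 1 := Real.sin_sq_le_one θ
      nlinarith [sq_nonneg κ]
  have hcontf : Continuous fun θ : ℝ => 1 / Real.sqrt (1 - κ ^ 2 * Real.sin θ ^ 2) := by
    apply continuous_const.div
    · exact Real.continuous_sqrt.comp (by continuity)
    · intro θ
      have := (hsin θ).2
      have : (0:ℝ) < 1 - κ^2 * Real.sin θ^2 := by linarith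
      exact ne_of_gt (Real.sqrt_pos.2 this)
  have hcontg : Continuous fun θ : ℝ => 1 + κ^2/2 * Real.sin θ^2 := by continuity
  have hmono : ∫ θ in (0:ℝ)..(π/2), (1 + κ^2/2 * Real.sin θ^2) ≤ ellipticK κ := by
    apply intervalIntegral.integral_mono_on (by positivity : (0:ℝ) ≤ π/2)
      (hcontg.intervalIntegrable _ _) (hcontf.intervalIntegrable _ _)
    intro θ _
    have h := inv_sqrt_lb (hsin θ).1 (hsin θ).2
    calc 1 + κ^2/2 * Real.sin θ^2 = 1 + (κ^2 * Real.sin θ^2)/2 := by ring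
      _ ≤ _ := h
  have hcalc : ∫ θ in (0:ℝ)..(π/2), (1 + κ^2/2 * Real.sin θ^2)
      = (π/2) * (1 + κ^2/4) := by
    rw [intervalIntegral.integral_add (intervalIntegrable_const)
      ((by continuity : Continuous fun θ : ℝ => κ^2/2 * Real.sin θ^2).intervalIntegrable _ _),
      intervalIntegral.integral_const_mul, integral_sin_sq]
    simp [Real.sin_pi_div_two, Real.cos_pi_div_two]
    ring
  linarith [hmono, hcalc.symm.le, hcalc.le]

lemma ellipticK_ub {κ : ℝ} (hk : κ^2 ≤ 1/2) :
    ellipticK κ ≤ (π/2) * (1 + κ^2/4 + κ^4) := by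
  have hsin : ∀ θ : ℝ, 0 ≤ κ^2 * Real.sin θ^2 ∧ κ^2 * Real.sin θ^2 ≤ 1/2 := by
    intro θ
    constructor
    · positivity
    · have h1 : Real.sin θ ^ 2 ≤ 1 := Real.sin_sq_le_one θ
      nlinarith [sq_nonneg κ]
  have hcontf : Continuous fun θ : ℝ => 1 / Real.sqrt (1 - κ ^ 2 * Real.sin θ ^ 2) := by
    apply continuous_const.div
    · exact Real.continuous_sqrt.comp (by continuity)
    · intro θ
      have := (hsin θ).2
      have : (0:ℝ) < 1 - κ^2 * Real.sin θ^2 := by linarith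
      exact ne_of_gt (Real.sqrt_pos.2 this)
  have hcontg : Continuous fun θ : ℝ => 1 + κ^2/2 * Real.sin θ^2 + κ^4 := by continuity
  have hmono : ellipticK κ ≤ ∫ θ in (0:ℝ)..(π/2), (1 + κ^2/2 * Real.sin θ^2 + κ^4) := by
    apply intervalIntegral.integral_mono_on (by positivity : (0:ℝ) ≤ π/2)
      (hcontf.intervalIntegrable _ _) (hcontg.intervalIntegrable _ _)
    intro θ _
    have h := inv_sqrt_ub (hsin θ).1 (hsin θ).2
    have h2 : (κ^2 * Real.sin θ^2)^2 ≤ κ^4 := by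
      have h1 : Real.sin θ ^ 2 ≤ 1 := Real.sin_sq_le_one θ
      have h3 : (Real.sin θ^2)^2 ≤ 1 := by nlinarith [sq_nonneg (Real.sin θ)]
      have h4 := mul_le_mul_of_nonneg_left h3 (sq_nonneg (κ^2))
      nlinarith [h4]
    calc (1:ℝ) / Real.sqrt (1 - κ ^ 2 * Real.sin θ ^ 2)
        ≤ 1 + (κ^2 * Real.sin θ^2)/2 + (κ^2 * Real.sin θ^2)^2 := h
      _ ≤ 1 + κ^2/2 * Real.sin θ^2 + κ^4 := by nlinarith
  have hcalc : ∫ θ in (0:ℝ)..(π/2), (1 + κ^2/2 * Real.sin θ^2 + κ^4)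
      = (π/2) * (1 + κ^2/4 + κ^4) := by
    rw [intervalIntegral.integral_add (intervalIntegrable_const.add
      ((by continuity : Continuous fun θ : ℝ => κ^2/2 * Real.sin θ^2).intervalIntegrable _ _))
      (intervalIntegrable_const),
      intervalIntegral.integral_add (intervalIntegrable_const)
      ((by continuity : Continuous fun θ : ℝ => κ^2/2 * Real.sin θ^2).intervalIntegrable _ _),
      intervalIntegral.integral_const_mul, integral_sin_sq]
    simp [Real.sin_pi_div_two, Real.cos_pi_div_two]
    ring
  linarith [hmono, hcalc.le]


lemma poly_lb {t m : ℝ} (ht0 : 0 ≤ t) (ht1 : t ≤ 1/4) (hm0 : 0 ≤ m) (hm : m ≤ t/2) :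
    (1 + 3/8*t - 10*t^2) * (1 + m/4 + m^2) ≤ 1 + t/2 - t^2/8 := by
  have hA : (0:ℝ) ≤ 1 + 3/8*t - 10*t^2 := by nlinarith
  have hm2q : m^2 ≤ t^2/4 := by nlinarith
  have hstep : 1 + m/4 + m^2 ≤ 1 + t/8 + t^2/4 := by linarith
  have h1 : (1 + 3/8*t - 10*t^2) * (1 + m/4 + m^2)
      ≤ (1 + 3/8*t - 10*t^2) * (1 + t/8 + t^2/4) := mul_le_mul_of_nonneg_left hstep hA
  nlinarith [sq_nonneg t, mul_nonneg ht0 ht0, mul_nonneg (mul_nonneg ht0 ht0) ht0]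

lemma poly_ub {t m : ℝ} (ht0 : 0 ≤ t) (ht1 : t ≤ 1/4) (hm : t/2 - t^2/2 ≤ m) :
    1 + t/2 ≤ (1 + 3/8*t + 10*t^2) * (1 + m/4) := by
  have hB : (0:ℝ) ≤ 1 + 3/8*t + 10*t^2 := by nlinarith
  have hstep : 1 + t/8 - t^2/8 ≤ 1 + m/4 := by linarith
  have h1 : (1 + 3/8*t + 10*t^2) * (1 + t/8 - t^2/8)
      ≤ (1 + 3/8*t + 10*t^2) * (1 + m/4) := mul_le_mul_of_nonneg_left hstep hB
  nlinarith [sq_nonneg t, mul_nonneg ht0 ht0, mul_nonneg (mul_nonneg ht0 ht0) ht0]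

set_option maxHeartbeats 1000000 in
/-- Ω(ε) = 1 + (3/8)ε² + O(ε⁴) as ε → 0. -/
theorem freqOmega_small_amplitude :
    ∃ C > (0:ℝ), ∃ δ > (0:ℝ), ∀ ε : ℝ, 0 ≤ ε → ε < δ →
      |freqOmega ε - 1 - (3 / 8) * ε ^ 2| ≤ C * ε ^ 4 := by
  refine ⟨10, by norm_num, 1/2, by norm_num, fun ε hε0 hε1 => ?_⟩
  have hu : (0:ℝ) < 2*(1+ε^2) := by positivity
  set k2 := (kappaMod ε)^2 with hk2def
  have hk2eq : k2 = ε^2 / (2*(1+ε^2)) := by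
    rw [hk2def, kappaMod, div_pow, Real.sq_sqrt hu.le]
  have hk2nn : 0 ≤ k2 := sq_nonneg _
  have hk2a : k2 ≤ ε^2/2 := by
    rw [hk2eq, div_le_iff₀ hu]; nlinarith
  have hk2b : ε^2/2 - ε^4/2 ≤ k2 := by
    rw [hk2eq, le_div_iff₀ hu]; nlinarith [sq_nonneg ε, sq_nonneg (ε^2)]
  have hk2half : k2 ≤ 1/2 := by nlinarith
  have hKlb := ellipticK_lb hk2half
  have hKub := ellipticK_ub hk2half
  rw [← hk2def] at hKlb hKub
  have h4eq : kappaMod ε ^ 4 = k2^2 := by rw [hk2def]; ring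
  rw [h4eq] at hKub
  have hpi : (0:ℝ) < π := Real.pi_pos
  set K := ellipticK (kappaMod ε) with hKdef
  have hKpos : 0 < K := by nlinarith
  have hS1 : Real.sqrt (1+ε^2) ≤ 1 + ε^2/2 := by
    rw [show (1:ℝ) + ε^2/2 = Real.sqrt ((1+ε^2/2)^2) from (Real.sqrt_sq (by positivity)).symm]
    exact Real.sqrt_le_sqrt (by nlinarith)
  have hS2 : 1 + ε^2/2 - ε^4/8 ≤ Real.sqrt (1+ε^2) := by
    apply Real.le_sqrt_of_sq_le
    have he2 : ε^2 ≤ 1 := by nlinarith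
    nlinarith [he2, sq_nonneg ε, sq_nonneg (ε^2), sq_nonneg (ε^3), sq_nonneg (ε^4)]
  set S := Real.sqrt (1+ε^2) with hSdef
  have hSnn : 0 ≤ S := Real.sqrt_nonneg _
  rw [freqOmega, ← hKdef, ← hSdef, abs_le]
  have hBnn : (0:ℝ) ≤ 1 + 3/8*ε^2 + 10*ε^4 := by positivity
  have ht1 : ε^2 ≤ 1/4 := by nlinarith
  have hAnn : (0:ℝ) ≤ 1 + 3/8*ε^2 - 10*ε^4 := by nlinarith [sq_nonneg ε, sq_nonneg (ε^2)]
  constructor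
  · -- lower bound
    have hA : 1 + 3/8*ε^2 - 10*ε^4 ≤ π/2 * S / K := by
      rw [le_div_iff₀ hKpos]
      have hpoly2 : (1 + 3/8*ε^2 - 10*ε^4) * (1 + k2/4 + k2^2) ≤ 1 + ε^2/2 - ε^4/8 := by
        have := poly_lb (sq_nonneg ε) ht1 hk2nn hk2a
        calc (1 + 3/8*ε^2 - 10*ε^4) * (1 + k2/4 + k2^2)
            = (1 + 3/8*(ε^2) - 10*(ε^2)^2) * (1 + k2/4 + k2^2) := by ring
          _ ≤ 1 + ε^2/2 - (ε^2)^2/8 := this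
          _ = 1 + ε^2/2 - ε^4/8 := by ring
      calc (1 + 3/8*ε^2 - 10*ε^4) * K
          ≤ (1 + 3/8*ε^2 - 10*ε^4) * (π/2 * (1 + k2/4 + k2^2)) :=
            mul_le_mul_of_nonneg_left hKub hAnn
        _ = π/2 * ((1 + 3/8*ε^2 - 10*ε^4) * (1 + k2/4 + k2^2)) := by ring
        _ ≤ π/2 * (1 + ε^2/2 - ε^4/8) := by
            exact mul_le_mul_of_nonneg_left hpoly2 (by positivity)
        _ ≤ π/2 * S := mul_le_mul_of_nonneg_left hS2 (by positivity)
    linarith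
  · -- upper bound
    have hB : π/2 * S / K ≤ 1 + 3/8*ε^2 + 10*ε^4 := by
      rw [div_le_iff₀ hKpos]
      have hpoly1 : 1 + ε^2/2 ≤ (1 + 3/8*ε^2 + 10*ε^4) * (1 + k2/4) := by
        have hm : (ε^2)/2 - (ε^2)^2/2 ≤ k2 := by nlinarith [hk2b]
        have := poly_ub (sq_nonneg ε) ht1 hm
        calc (1:ℝ) + ε^2/2 ≤ (1 + 3/8*(ε^2) + 10*(ε^2)^2) * (1 + k2/4) := this
          _ = (1 + 3/8*ε^2 + 10*ε^4) * (1 + k2/4) := by ring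
      calc π/2 * S ≤ π/2 * (1 + ε^2/2) := mul_le_mul_of_nonneg_left hS1 (by positivity)
        _ ≤ π/2 * ((1 + 3/8*ε^2 + 10*ε^4) * (1 + k2/4)) :=
            mul_le_mul_of_nonneg_left hpoly1 (by positivity)
        _ = (1 + 3/8*ε^2 + 10*ε^4) * (π/2 * (1 + k2/4)) := by ring
        _ ≤ (1 + 3/8*ε^2 + 10*ε^4) * K := mul_le_mul_of_nonneg_left hKlb hBnn
    linarith
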